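/- Let G ∼ RIG(n,d,p) where 1−p = (1−δ²)^d = Ω(1). Then the expected triangle count satisfies E[T(G)] = C(n,3)·(p³ + dδ³·(1+2p)·(1−p)² + O(dδ⁴)) as n → ∞. -/

import Mathlib

open MeasureTheory Filter

noncomputable section

/-- Total variation distance between two measures. -/
def tvDist {α : Type*} [MeasurableSpace α] (μ ν : Measure α) : ℝ :=
  ⨆ s : Set α, |(μ s).toReal - (ν s).toReal|

/-- The Bernoulli measure on `Bool` with success probability `p`. -/
def bern (p : ℝ) : Measure Bool :=
  ENNReal.ofReal p • Measure.dirac true + ENNReal.ofReal (1 - p) • Measure.dirac false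

/-- Index type for potential edges of a graph on `Fin n`. -/
abbrev PairIdx (n : ℕ) := {e : Fin n × Fin n // e.1 < e.2}

/-- Erdős–Rényi graph `G(n,p)`, as a measure on edge indicator functions. -/
def erdosRenyi (n : ℕ) (p : ℝ) : Measure (PairIdx n → Bool) :=
  Measure.pi fun _ => bern p

/-- Membership configuration of `n` independent `δ`-random subsets of `{1,…,d}`. -/
def rigConfig (n d : ℕ) (δ : ℝ) : Measure (Fin n → Fin d → Bool) :=
  Measure.pi fun _ => Measure.pi fun _ => bern δ

/-- Cardinality of `S_i ∩ S_j` for a membership configuration. -/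
def interCard {n d : ℕ} (x : Fin n → Fin d → Bool) (i j : Fin n) : ℕ :=
  (Finset.univ.filter fun k => x i k = true ∧ x j k = true).card

/-- The τ-random intersection graph: edge `{i,j}` present iff `|S_i ∩ S_j| ≥ τ`. -/
def rigTau (n d : ℕ) (δ : ℝ) (τ : ℕ) : Measure (PairIdx n → Bool) :=
  (rigConfig n d δ).map fun x e => decide (τ ≤ interCard x e.1.1 e.1.2)

/-- The random intersection graph `RIG(n,d,p)` where `p = 1 - (1-δ²)^d`. -/
def rig (n d : ℕ) (δ : ℝ) : Measure (PairIdx n → Bool) := rigTau n d δ 1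

/-- Edge indicator of the unordered pair `{i,j}` in a graph. -/
def edgeB {n : ℕ} (g : PairIdx n → Bool) (i j : Fin n) : Bool :=
  if h : i < j then g ⟨(i, j), h⟩
  else if h' : j < i then g ⟨(j, i), h'⟩
  else false

/-- Ordered triples `i < j < k` of vertices. -/
def triples (n : ℕ) : Finset (Fin n × Fin n × Fin n) :=
  Finset.univ.filter fun t => t.1 < t.2.1 ∧ t.2.1 < t.2.2

/-- The triangle count `T(G)` of a graph. -/
def triangleCount {n : ℕ} (g : PairIdx n → Bool) : ℕ :=
  ((triples n).filter fun t =>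
    edgeB g t.1 t.2.1 = true ∧ edgeB g t.1 t.2.2 = true ∧ edgeB g t.2.1 t.2.2 = true).card

/-! For distinct vertices `i, j`, the event `S_i ∩ S_j = ∅` says that no element `k ∈ {1,…,d}`
lies in both sets, so its indicator, and the indicator of any conjunction of such events, is a
product over `k`. The `d` columns `k ↦ (x_i k, x_j k, x_l k)` are independent, so
inclusion–exclusion over the three pairs gives the triangle probability exactly,
`1 - 3(1-δ²)^d + 3(1-2δ²+δ³)^d - (1-3δ²+2δ³)^d`, and `E[T]` is `C(n,3)` times it.

With `q = 1 - δ²` and `1 - p = q^d`, the bases `1-2δ²+δ³` and `1-3δ²+2δ³` exceed `q²` and `q³`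
by `δ³ - δ⁴` and `2δ³ - 3δ⁴ + δ⁶`. The second-order bound
`0 ≤ x^d - y^d - d(x-y)y^d ≤ d(x-y)(d(x-y) + 1 - y)` for `0 ≤ y ≤ x ≤ 1` then gives the first-order
terms `dδ³q^{2d}` and `2dδ³q^{3d}` up to `O(dδ⁴)`, because `dδ² ≤ -log(1-p)` stays bounded. -/

theorem sum_prod_columns_mul_prod_prod {ι κ V : Type*} [Fintype ι] [DecidableEq ι] [Fintype κ]
    [DecidableEq κ] [Fintype V] (w : V → ℝ) (φ : κ → (ι → V) → ℝ) :
    ∑ x : ι → κ → V, (∏ k, φ k fun m => x m k) * ∏ m, ∏ k, w (x m k) =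
      ∏ k, ∑ c : ι → V, φ k c * ∏ m, w (c m) := by
  rw [Fintype.prod_sum, ← (Equiv.piComm fun (_ : ι) (_ : κ) => V).sum_comp]
  refine Fintype.sum_congr _ _ fun x => ?_
  rw [Finset.prod_mul_distrib, Finset.prod_comm]
  rfl

theorem sum_apply₃_mul_prod {ι V : Type*} [Fintype ι] [DecidableEq ι] [Fintype V]
    [DecidableEq V] (w : V → ℝ) (hw : ∑ v, w v = 1) {i j l : ι} (hij : i ≠ j) (hil : i ≠ l)
    (hjl : j ≠ l) (φ : V → V → V → ℝ) :
    ∑ c : ι → V, φ (c i) (c j) (c l) * ∏ m, w (c m) =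
      ∑ a, ∑ b, ∑ e, φ a b e * (w a * w b * w e) := by
  have hfiber : ∀ a b e, ∑ c : ι → V, (if c i = a ∧ c j = b ∧ c l = e then ∏ m, w (c m) else 0)
      = w a * w b * w e := by
    intro a b e
    let g : ι → V → ℝ := fun m v =>
      if (m = i → v = a) ∧ (m = j → v = b) ∧ (m = l → v = e) then w v else 0
    calc _ = ∑ c : ι → V, ∏ m, g m (c m) := by
          refine Fintype.sum_congr _ _ fun c => ?_
          simp only [g, Fintype.prod_ite_zero, forall_and, forall_eq]
      _ = ∏ m, ∑ v, g m v := (Fintype.prod_sum g).symm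
      _ = ∏ m, (if m = i then w a else 1) * (if m = j then w b else 1) *
            (if m = l then w e else 1) := by
          refine Fintype.prod_congr _ _ fun m => ?_
          by_cases hi : m = i <;> by_cases hj : m = j <;> by_cases hl : m = l <;>
            subst_vars <;> simp_all [g]
      _ = w a * w b * w e := by
          simp only [Finset.prod_mul_distrib, Fintype.prod_ite_eq']
  calc ∑ c : ι → V, φ (c i) (c j) (c l) * ∏ m, w (c m)
      = ∑ c : ι → V, ∑ a, ∑ b, ∑ e,
          φ a b e * (if c i = a ∧ c j = b ∧ c l = e then ∏ m, w (c m) else 0) := by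
        simp [ite_and, Finset.sum_ite_eq]
    _ = _ := by
        simp only [Finset.sum_comm (γ := ι → V), ← Finset.mul_sum, hfiber]

theorem sum_prod_apply₃_mul_prod_prod {ι κ V : Type*} [Fintype ι] [DecidableEq ι] [Fintype κ]
    [DecidableEq κ] [Fintype V] [DecidableEq V] (w : V → ℝ) (hw : ∑ v, w v = 1) {i j l : ι}
    (hij : i ≠ j) (hil : i ≠ l) (hjl : j ≠ l) (φ : V → V → V → ℝ) :
    ∑ x : ι → κ → V, (∏ k, φ (x i k) (x j k) (x l k)) * ∏ m, ∏ k, w (x m k) =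
      (∑ a, ∑ b, ∑ e, φ a b e * (w a * w b * w e)) ^ Fintype.card κ := by
  rw [sum_prod_columns_mul_prod_prod w fun _ c => φ (c i) (c j) (c l),
    sum_apply₃_mul_prod w hw hij hil hjl, Finset.prod_const, Finset.card_univ]

def bernMass (δ : ℝ) (b : Bool) : ℝ := if b then δ else 1 - δ

theorem sum_bernMass (δ : ℝ) : ∑ b, bernMass δ b = 1 := by
  simp [bernMass]

theorem bern_singleton (δ : ℝ) (b : Bool) : bern δ {b} = ENNReal.ofReal (bernMass δ b) := by
  cases b <;> simp [bern, bernMass]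

theorem isProbabilityMeasure_bern {δ : ℝ} (h0 : 0 ≤ δ) (h1 : δ ≤ 1) :
    IsProbabilityMeasure (bern δ) :=
  ⟨by simp [bern, ← ENNReal.ofReal_add h0 (sub_nonneg.2 h1)]⟩

theorem bernMass_nonneg {δ : ℝ} (h0 : 0 ≤ δ) (h1 : δ ≤ 1) (b : Bool) : 0 ≤ bernMass δ b := by
  cases b <;> simp [bernMass, h0, h1]

theorem rigConfig_singleton_toReal {n d : ℕ} {δ : ℝ} (h0 : 0 ≤ δ) (h1 : δ ≤ 1)
    (x : Fin n → Fin d → Bool) :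
    (rigConfig n d δ {x}).toReal = ∏ m, ∏ k, bernMass δ (x m k) := by
  have := isProbabilityMeasure_bern h0 h1
  simp only [rigConfig, ← Set.univ_pi_singleton, Measure.pi_pi, ENNReal.toReal_prod,
    bern_singleton, ENNReal.toReal_ofReal (bernMass_nonneg h0 h1 _)]

def intersectionGraph {n d : ℕ} (x : Fin n → Fin d → Bool) : PairIdx n → Bool :=
  fun e => decide (1 ≤ interCard x e.1.1 e.1.2)

theorem integral_rig {n d : ℕ} {δ : ℝ} (h0 : 0 ≤ δ) (h1 : δ ≤ 1)
    (f : (PairIdx n → Bool) → ℝ) :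
    ∫ g, f g ∂rig n d δ =
      ∑ x : Fin n → Fin d → Bool, (∏ m, ∏ k, bernMass δ (x m k)) * f (intersectionGraph x) := by
  have := isProbabilityMeasure_bern h0 h1
  have : IsProbabilityMeasure (rigConfig n d δ) := by unfold rigConfig; infer_instance
  rw [rig, rigTau, integral_map (measurable_of_countable _).aemeasurable
      (measurable_of_countable _).stronglyMeasurable.aestronglyMeasurable,
    integral_fintype .of_finite]
  simp only [smul_eq_mul, measureReal_def, rigConfig_singleton_toReal h0 h1]
  rfl

-- `∏ k, notBoth (x i k) (x j k)` is the indicator of `S_i ∩ S_j = ∅`.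
def notBoth (a b : Bool) : ℝ := if a = true ∧ b = true then 0 else 1

theorem edgeB_intersectionGraph_indicator {n d : ℕ} (x : Fin n → Fin d → Bool) {i j : Fin n}
    (h : i < j) :
    (if edgeB (intersectionGraph x) i j = true then (1 : ℝ) else 0) =
      1 - ∏ k, notBoth (x i k) (x j k) := by
  have hedge : edgeB (intersectionGraph x) i j = true ↔ ∃ k, x i k = true ∧ x j k = true := by
    simp [edgeB, h, intersectionGraph, interCard, Finset.Nonempty]
  by_cases hk : ∃ k, x i k = true ∧ x j k = true
  · obtain ⟨k, hk'⟩ := hk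
    rw [if_pos (hedge.2 ⟨k, hk'⟩),
      Finset.prod_eq_zero (Finset.mem_univ k) (by simp [notBoth, hk']), sub_zero]
  · rw [if_neg (hk ∘ hedge.1),
      Finset.prod_eq_one fun k _ => by simp [notBoth, not_exists.1 hk k], sub_self]

theorem triangleCount_intersectionGraph {n d : ℕ} (x : Fin n → Fin d → Bool) :
    (triangleCount (intersectionGraph x) : ℝ) =
      ∑ t ∈ triples n, (1 - ∏ k, notBoth (x t.1 k) (x t.2.1 k)) *
        (1 - ∏ k, notBoth (x t.1 k) (x t.2.2 k)) * (1 - ∏ k, notBoth (x t.2.1 k) (x t.2.2 k)) := by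
  rw [triangleCount, Finset.card_filter, Nat.cast_sum]
  refine Finset.sum_congr rfl fun t ht => ?_
  obtain ⟨-, h12, h23⟩ := Finset.mem_filter.1 ht
  rw [← edgeB_intersectionGraph_indicator x h12,
    ← edgeB_intersectionGraph_indicator x (h12.trans h23),
    ← edgeB_intersectionGraph_indicator x h23]
  split_ifs <;> simp_all

def triangleProb (δ : ℝ) (d : ℕ) : ℝ :=
  1 - 3 * (1 - δ ^ 2) ^ d + 3 * (1 - 2 * δ ^ 2 + δ ^ 3) ^ d - (1 - 3 * δ ^ 2 + 2 * δ ^ 3) ^ d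

theorem sum_triangleIndicator_mul_prod {n d : ℕ} (δ : ℝ) {i j l : Fin n} (hij : i ≠ j) (hil : i ≠ l)
    (hjl : j ≠ l) :
    ∑ x : Fin n → Fin d → Bool, (1 - ∏ k, notBoth (x i k) (x j k)) *
        (1 - ∏ k, notBoth (x i k) (x l k)) * (1 - ∏ k, notBoth (x j k) (x l k)) *
          ∏ m, ∏ k, bernMass δ (x m k) = triangleProb δ d := by
  have hcol := fun φ => Fintype.card_fin d ▸
    sum_prod_apply₃_mul_prod_prod (κ := Fin d) (bernMass δ) (sum_bernMass δ) hij hil hjl φ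
  have hinclExcl : ∀ x : Fin n → Fin d → Bool, (1 - ∏ k, notBoth (x i k) (x j k)) *
        (1 - ∏ k, notBoth (x i k) (x l k)) * (1 - ∏ k, notBoth (x j k) (x l k)) =
      (∏ _k : Fin d, (1 : ℝ)) - (∏ k, notBoth (x i k) (x j k)) - (∏ k, notBoth (x i k) (x l k))
        - (∏ k, notBoth (x j k) (x l k)) + (∏ k, notBoth (x i k) (x j k) * notBoth (x i k) (x l k))
        + (∏ k, notBoth (x i k) (x j k) * notBoth (x j k) (x l k))
        + (∏ k, notBoth (x i k) (x l k) * notBoth (x j k) (x l k))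
        - ∏ k, notBoth (x i k) (x j k) * notBoth (x i k) (x l k) * notBoth (x j k) (x l k) := by
    intro x
    simp only [Finset.prod_mul_distrib, Finset.prod_const_one]
    ring
  simp_rw [hinclExcl]
  simp only [sub_mul, add_mul, Finset.sum_sub_distrib, Finset.sum_add_distrib]
  rw [hcol fun _ _ _ => 1, hcol fun a b _ => notBoth a b, hcol fun a _ e => notBoth a e,
    hcol fun _ b e => notBoth b e, hcol fun a b e => notBoth a b * notBoth a e,
    hcol fun a b e => notBoth a b * notBoth b e, hcol fun a b e => notBoth a e * notBoth b e,
    hcol fun a b e => notBoth a b * notBoth a e * notBoth b e]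
  simp only [Fintype.univ_bool, bernMass, notBoth, mul_ite, ite_mul, one_mul, zero_mul, mul_zero,
    mul_one, Finset.mem_singleton, Bool.true_eq_false, Bool.false_eq_true, not_false_eq_true,
    Finset.sum_insert, Finset.sum_singleton, ↓reduceIte, and_true, and_false, add_zero, zero_add,
    ite_self, triangleProb]
  ring

def triplesEquivOrderEmbedding (n : ℕ) : triples n ≃ (Fin 3 ↪o Fin n) where
  toFun t := OrderEmbedding.ofStrictMono ![t.1.1, t.1.2.1, t.1.2.2] <| by
    obtain ⟨-, h12, h23⟩ := Finset.mem_filter.1 t.2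
    refine Fin.strictMono_iff_lt_succ.2 fun i => ?_
    fin_cases i
    exacts [h12, h23]
  invFun f := ⟨(f 0, f 1, f 2), Finset.mem_filter.2 ⟨Finset.mem_univ _, by simp, by simp⟩⟩
  left_inv t := rfl
  right_inv f := by
    ext i
    fin_cases i <;> rfl

theorem card_triples (n : ℕ) : (triples n).card = n.choose 3 := by
  rw [← Fintype.card_coe, Fintype.card_congr
      ((triplesEquivOrderEmbedding n).trans Set.powersetCard.ofFinEmbEquiv),
    ← Nat.card_eq_fintype_card, Set.powersetCard.card, Nat.card_fin]

theorem integral_triangleCount_rig (n d : ℕ) {δ : ℝ} (h0 : 0 ≤ δ) (h1 : δ ≤ 1) :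
    ∫ g, (triangleCount g : ℝ) ∂rig n d δ = n.choose 3 * triangleProb δ d := by
  simp_rw [integral_rig h0 h1, triangleCount_intersectionGraph, Finset.mul_sum]
  rw [Finset.sum_comm, ← card_triples, ← nsmul_eq_mul, ← Finset.sum_const]
  refine Finset.sum_congr rfl fun t ht => ?_
  obtain ⟨-, h12, h23⟩ := Finset.mem_filter.1 ht
  simp_rw [mul_comm (∏ m, ∏ k, bernMass δ _)]
  exact sum_triangleIndicator_mul_prod δ h12.ne (h12.trans h23).ne h23.ne

theorem pow_sub_pow_sub_mul_pow_bounds {x y : ℝ} (hy : 0 ≤ y) (hyx : y ≤ x) (hx : x ≤ 1)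
    (d : ℕ) :
    0 ≤ x ^ d - y ^ d - d * (x - y) * y ^ d ∧
      x ^ d - y ^ d - d * (x - y) * y ^ d ≤ d * (x - y) * (d * (x - y) + (1 - y)) := by
  induction d with
  | zero => simp
  | succ d ih =>
    obtain ⟨ih_lo, ih_hi⟩ := ih
    have hyd1 : y ^ d ≤ 1 := pow_le_one₀ hy (hyx.trans hx)
    have hstep : 0 ≤ (x - y) * (d * (x - y) + (1 - y)) := by
      have : (0 : ℝ) ≤ d := d.cast_nonneg
      have := sub_nonneg.2 hyx
      have := sub_nonneg.2 (hyx.trans hx)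
      positivity
    have hrec : x ^ (d + 1) - y ^ (d + 1) - ↑(d + 1) * (x - y) * y ^ (d + 1) =
        x * (x ^ d - y ^ d - d * (x - y) * y ^ d) +
          y ^ d * ((x - y) * (d * (x - y) + (1 - y))) := by
      push_cast; ring
    rw [hrec]
    constructor
    · have := hy.trans hyx
      positivity
    · have h1 : x * (x ^ d - y ^ d - d * (x - y) * y ^ d) ≤ x ^ d - y ^ d - d * (x - y) * y ^ d :=
        mul_le_of_le_one_left ih_lo hx
      have h2 : y ^ d * ((x - y) * (d * (x - y) + (1 - y))) ≤ (x - y) * (d * (x - y) + (1 - y)) :=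
        mul_le_of_le_one_left hstep hyd1
      have h3 : (0 : ℝ) ≤ (x - y) * (x - y) * (2 * d + 1) := by
        have := sub_nonneg.2 hyx
        positivity
      push_cast
      nlinarith

theorem abs_pow_sub_pow_sub_mul_pow_le {x y ε η : ℝ} (d : ℕ) (hy : 0 ≤ y) (hx : x ≤ 1)
    (hxy : x - y = ε - η) (hη : 0 ≤ η) (hηε : η ≤ ε) :
    |x ^ d - y ^ d - d * ε * y ^ d| ≤ d * ε * (d * ε + (1 - y)) + d * η := by
  have hyx : y ≤ x := by linarith
  obtain ⟨hlo, hhi⟩ := pow_sub_pow_sub_mul_pow_bounds hy hyx hx d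
  have hd : (0 : ℝ) ≤ d := d.cast_nonneg
  have hyd : 0 ≤ y ^ d := pow_nonneg hy d
  have hyd1 : y ^ d ≤ 1 := pow_le_one₀ hy (hyx.trans hx)
  have hgrow : d * (x - y) * (d * (x - y) + (1 - y)) ≤ d * ε * (d * ε + (1 - y)) := by
    have : x - y ≤ ε := by linarith
    have : 0 ≤ x - y := by linarith
    have : 0 ≤ 1 - y := by linarith
    have : 0 ≤ ε := by linarith
    gcongr
  have hcorr : d * η * y ^ d ≤ d * η := mul_le_of_le_one_right (by positivity) hyd1
  have hsplit : x ^ d - y ^ d - d * ε * y ^ d =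
      (x ^ d - y ^ d - d * (x - y) * y ^ d) - d * η * y ^ d := by
    rw [hxy]; ring
  rw [hsplit, abs_le]
  constructor <;> nlinarith [mul_nonneg (mul_nonneg hd hη) hyd]

theorem abs_triangleProb_sub_le {δ p K : ℝ} {d : ℕ} (h0 : 0 ≤ δ) (h1 : δ ≤ 1)
    (hp : 1 - p = (1 - δ ^ 2) ^ d) (hK : d * δ ^ 2 ≤ K) :
    |triangleProb δ d - (p ^ 3 + d * δ ^ 3 * (1 + 2 * p) * (1 - p) ^ 2)| ≤
      (7 * K + 20) * (d * δ ^ 4) := by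
  have hq0 : 0 ≤ 1 - δ ^ 2 := by nlinarith
  have hη : 0 ≤ 3 * δ ^ 4 - δ ^ 6 := by
    nlinarith [mul_nonneg (pow_nonneg h0 4) (by nlinarith : (0 : ℝ) ≤ 3 - δ ^ 2)]
  have hηε : 3 * δ ^ 4 - δ ^ 6 ≤ 2 * δ ^ 3 := by
    have : 0 ≤ δ ^ 3 * (1 - δ) ^ 2 * (2 + δ) := by positivity
    nlinarith
  have hX := abs_pow_sub_pow_sub_mul_pow_le d (x := 1 - 2 * δ ^ 2 + δ ^ 3)
    (ε := δ ^ 3) (η := δ ^ 4) (pow_nonneg hq0 2) (by nlinarith) (by ring) (by positivity)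
    (pow_le_pow_of_le_one h0 h1 (by norm_num))
  have hY := abs_pow_sub_pow_sub_mul_pow_le d (x := 1 - 3 * δ ^ 2 + 2 * δ ^ 3)
    (ε := 2 * δ ^ 3) (η := 3 * δ ^ 4 - δ ^ 6) (pow_nonneg hq0 3) (by nlinarith) (by ring) hη hηε
  rw [pow_right_comm, ← hp] at hX hY
  set A := (1 - 2 * δ ^ 2 + δ ^ 3) ^ d - (1 - p) ^ 2 - d * δ ^ 3 * (1 - p) ^ 2 with hA
  set B := (1 - 3 * δ ^ 2 + 2 * δ ^ 3) ^ d - (1 - p) ^ 3 - d * (2 * δ ^ 3) * (1 - p) ^ 3 with hB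
  have hsplit : triangleProb δ d - (p ^ 3 + d * δ ^ 3 * (1 + 2 * p) * (1 - p) ^ 2) =
      3 * A - B := by
    rw [hA, hB, triangleProb, ← hp]; ring
  have hbound : 3 * (d * δ ^ 3 * (d * δ ^ 3 + (1 - (1 - δ ^ 2) ^ 2)) + d * δ ^ 4) +
      (d * (2 * δ ^ 3) * (d * (2 * δ ^ 3) + (1 - (1 - δ ^ 2) ^ 3)) + d * (3 * δ ^ 4 - δ ^ 6))
      ≤ (7 * K + 20) * (d * δ ^ 4) := by
    have hfactor : 3 * (d * δ ^ 3 * (d * δ ^ 3 + (1 - (1 - δ ^ 2) ^ 2)) + d * δ ^ 4) +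
        (d * (2 * δ ^ 3) * (d * (2 * δ ^ 3) + (1 - (1 - δ ^ 2) ^ 3)) + d * (3 * δ ^ 4 - δ ^ 6))
        = (7 * (d * δ ^ 2) + 12 * δ - 9 * δ ^ 3 + 2 * δ ^ 5 - δ ^ 2 + 6) * (d * δ ^ 4) := by
      ring
    rw [hfactor]
    have : δ ^ 5 ≤ 1 := pow_le_one₀ h0 h1
    have : 0 ≤ δ ^ 3 := pow_nonneg h0 3
    have : 0 ≤ δ ^ 2 := pow_nonneg h0 2
    exact mul_le_mul_of_nonneg_right (by linarith) (by positivity)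
  rw [hsplit]
  calc |3 * A - B| ≤ |3 * A| + |B| := abs_sub _ _
    _ = 3 * |A| + |B| := by rw [abs_mul, abs_of_pos three_pos]
    _ ≤ _ := by linarith

theorem mul_sq_le_neg_log_of_le_pow {c δ : ℝ} {d : ℕ} (hc : 0 < c) (hδ : δ ^ 2 ≤ 1)
    (h : c ≤ (1 - δ ^ 2) ^ d) : d * δ ^ 2 ≤ -Real.log c := by
  have hexp : (1 - δ ^ 2) ^ d ≤ Real.exp (-(d * δ ^ 2)) :=
    calc (1 - δ ^ 2) ^ d ≤ Real.exp (-δ ^ 2) ^ d :=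
          pow_le_pow_left₀ (by linarith) (Real.one_sub_le_exp_neg _) d
      _ = Real.exp (-(d * δ ^ 2)) := by rw [← Real.exp_nat_mul]; ring_nf
  linarith [(Real.log_le_iff_le_exp hc).2 (h.trans hexp)]

/-- For `G ∼ RIG(n,d,p)` with `1-p = (1-δ²)^d = Ω(1)`,
`E[T(G)] = C(n,3)(p³ + dδ³(1+2p)(1-p)² + O(dδ⁴))`. -/
theorem rig_triangleCount_expectation
    (p δ : ℕ → ℝ) (d : ℕ → ℕ)
    (hδ : ∀ n, 0 < δ n ∧ δ n < 1)
    (hrel : ∀ n, 1 - p n = (1 - δ n ^ 2) ^ d n)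
    (hpbd : ∃ c > (0 : ℝ), ∀ᶠ n : ℕ in atTop, c ≤ 1 - p n) :
    ∃ C > (0 : ℝ), ∀ᶠ n : ℕ in atTop,
      |(∫ g, (triangleCount g : ℝ) ∂(rig n (d n) (δ n))) -
          (n.choose 3 : ℝ) *
            (p n ^ 3 + (d n : ℝ) * δ n ^ 3 * (1 + 2 * p n) * (1 - p n) ^ 2)| ≤
        C * ((n.choose 3 : ℝ) * ((d n : ℝ) * δ n ^ 4)) := by
  obtain ⟨c, hc, hev⟩ := hpbd
  refine ⟨7 * |Real.log c| + 20, by positivity, ?_⟩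
  filter_upwards [hev] with n hn
  obtain ⟨hδ0, hδ1⟩ := hδ n
  have hdK : d n * δ n ^ 2 ≤ |Real.log c| :=
    (mul_sq_le_neg_log_of_le_pow hc (by nlinarith) (hrel n ▸ hn)).trans (neg_le_abs _)
  rw [integral_triangleCount_rig n (d n) hδ0.le hδ1.le, ← mul_sub, abs_mul, Nat.abs_cast,
    mul_left_comm]
  exact mul_le_mul_of_nonneg_left (abs_triangleProb_sub_le hδ0.le hδ1.le (hrel n) hdK)
    (Nat.cast_nonneg _)
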